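/- arXiv:2603.06105 — 3 statements merged into one kernel-verified Lean document; each statement's English description precedes it below -/
import Mathlib

section
/- For every i with 1 ≤ i ≤ g−1, the matrix D_i := A_i² · B_{i+1}² · (A_{i+1}B_{i+1}A_{i+1}) · C_i² · (A_{i+1}B_{i+1}A_{i+1})^{−1} equals I + 2E_{i,i+1} − 2E_{g+i+1,g+i}. -/
open Matrix

/-- The 2g×2g integer matrix with a single 1 at (0-based) position (a,b). -/
def E (g a b : ℕ) : Matrix (Fin (2*g)) (Fin (2*g)) ℤ :=
  Matrix.of fun x y => if x.1 = a ∧ y.1 = b then 1 else 0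

def A (g i : ℕ) : Matrix (Fin (2*g)) (Fin (2*g)) ℤ := 1 + E g i (g+i)

def B (g i : ℕ) : Matrix (Fin (2*g)) (Fin (2*g)) ℤ := 1 - E g (g+i) i

def C (g i : ℕ) : Matrix (Fin (2*g)) (Fin (2*g)) ℤ :=
  1 - E g i (g+i) - E g (i+1) (g+i+1) + E g (i+1) (g+i) + E g i (g+i+1)

lemma Emul1 (g a b c d : ℕ) (h : b < 2*g) (hbc : b = c) :
    E g a b * E g c d = E g a d := by
  subst hbc
  ext x y
  simp only [E, Matrix.mul_apply, Matrix.of_apply]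
  rw [Finset.sum_eq_single ⟨b, h⟩]
  · by_cases hx : x.1 = a <;> by_cases hy : y.1 = d <;> simp [hx, hy]
  · intro k _ hk
    have : k.1 ≠ b := fun hkb => hk (Fin.ext hkb)
    simp [this]
  · simp

lemma Emul0 (g a b c d : ℕ) (hbc : b ≠ c) :
    E g a b * E g c d = 0 := by
  ext x y
  simp only [E, Matrix.mul_apply, Matrix.of_apply, Matrix.zero_apply]
  apply Finset.sum_eq_zero
  intro k _
  by_cases h1 : k.1 = b
  · have : ¬ (k.1 = c) := by omega
    simp [this]
  · simp [h1]

/-- For `i+1 < g` (0-based), the matrix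
`D_i = A_i² B_{i+1}² (A_{i+1}B_{i+1}A_{i+1}) C_i² (A_{i+1}B_{i+1}A_{i+1})⁻¹`
equals `I + 2E_{i,i+1} - 2E_{g+i+1,g+i}`. -/
theorem stmt4 (g i : ℕ) (hg : 2 ≤ g) (hi : i + 1 < g) :
    A g i ^ 2 * B g (i+1) ^ 2 * (A g (i+1) * B g (i+1) * A g (i+1)) * C g i ^ 2 *
        (A g (i+1) * B g (i+1) * A g (i+1))⁻¹
      = 1 + 2 • E g i (i+1) - 2 • E g (g+i+1) (g+i) := by
  have hR : A g (i+1) * B g (i+1) * A g (i+1)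
      = 1 - E g (i+1) (i+1) - E g (g+(i+1)) (g+(i+1)) + E g (i+1) (g+(i+1))
        - E g (g+(i+1)) (i+1) := by
    simp (disch := omega) only [A, B, mul_add, add_mul, mul_sub, sub_mul, one_mul, mul_one,
      Emul1, Emul0, Nat.add_assoc]
    abel
  have hRS : (1 - E g (i+1) (i+1) - E g (g+(i+1)) (g+(i+1)) + E g (i+1) (g+(i+1))
        - E g (g+(i+1)) (i+1)) *
      (1 - E g (i+1) (i+1) - E g (g+(i+1)) (g+(i+1)) - E g (i+1) (g+(i+1))
        + E g (g+(i+1)) (i+1)) = 1 := by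
    simp (disch := omega) only [mul_add, add_mul, mul_sub, sub_mul, one_mul, mul_one,
      Emul1, Emul0, Nat.add_assoc]
    abel
  have hinv : (A g (i+1) * B g (i+1) * A g (i+1))⁻¹
      = 1 - E g (i+1) (i+1) - E g (g+(i+1)) (g+(i+1)) - E g (i+1) (g+(i+1))
        + E g (g+(i+1)) (i+1) := by
    rw [hR]
    exact Matrix.inv_eq_right_inv hRS
  rw [hinv, hR, pow_two, pow_two, pow_two]
  simp (disch := omega) only [A, B, C, mul_add, add_mul, mul_sub, sub_mul, one_mul, mul_one,
    Emul1, Emul0, Nat.add_assoc, mul_zero, zero_mul, sub_zero, zero_sub, add_zero, zero_add,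
    two_smul]
  abel
end

section
/- For every k with 2 ≤ k ≤ g, one has Z_{k−1,k}^{2} = [V_k, D_{k−1}^{−1}] · V_{k−1}^{4}, where [V_k, D_{k−1}^{−1}] := V_k D_{k−1}^{−1} V_k^{−1} D_{k−1} is the group commutator. -/
open Matrix

/-- `V_i^t = I + t E_{i,g+i}`. -/
def V (g i : ℕ) (t : ℤ) : Matrix (Fin (2*g)) (Fin (2*g)) ℤ := 1 + t • E g i (g+i)

/-- `Z_{j,k}^t = I + t (E_{j,g+k} + E_{k,g+j})`. -/
def Z (g j k : ℕ) (t : ℤ) : Matrix (Fin (2*g)) (Fin (2*g)) ℤ :=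
  1 + t • (E g j (g+k) + E g k (g+j))

/-- `D_i = I + 2E_{i,i+1} - 2E_{g+i+1,g+i}`. -/
def D (g i : ℕ) : Matrix (Fin (2*g)) (Fin (2*g)) ℤ :=
  1 + 2 • E g i (i+1) - 2 • E g (g+i+1) (g+i)

/-- The inverse of `D_i`, namely `I - 2E_{i,i+1} + 2E_{g+i+1,g+i}`. -/
def Dinv (g i : ℕ) : Matrix (Fin (2*g)) (Fin (2*g)) ℤ :=
  1 - 2 • E g i (i+1) + 2 • E g (g+i+1) (g+i)

lemma E_mul_E_same (g a b d : ℕ) (hb : b < 2*g) :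
    E g a b * E g b d = E g a d := by
  ext x y
  simp only [E, Matrix.mul_apply, Matrix.of_apply]
  rw [Finset.sum_eq_single (⟨b, hb⟩ : Fin (2*g))]
  · by_cases h1 : x.1 = a <;> by_cases h2 : y.1 = d <;> simp_all
  · intro z _ hz
    by_cases h : z.1 = b
    · exact absurd (Fin.ext h) hz
    · simp [h]
  · simp

lemma E_mul_E_ne (g a b c d : ℕ) (h : b ≠ c) :
    E g a b * E g c d = 0 := by
  ext x y
  simp only [E, Matrix.mul_apply, Matrix.of_apply, Matrix.zero_apply]
  apply Finset.sum_eq_zero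
  intro z _
  by_cases h1 : z.1 = b
  · have : ¬ (z.1 = c ∧ y.1 = d) := fun hc => h (h1 ▸ hc.1)
    simp [this]
  · simp [h1]

lemma E_mul_E_same' (g a b c d : ℕ) (hb : b < 2*g) (h : b = c) :
    E g a b * E g c d = E g a d := h ▸ E_mul_E_same g a b d hb

/-- For `1 ≤ k < g` (0-based version of `2 ≤ k ≤ g` in 1-based indexing),
`Z_{k-1,k}² = [V_k, D_{k-1}⁻¹] V_{k-1}⁴`, where
`[V_k, D_{k-1}⁻¹] = V_k D_{k-1}⁻¹ V_k⁻¹ D_{k-1}`. -/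
theorem stmt7 (g k : ℕ) (hg : 2 ≤ g) (hk1 : 1 ≤ k) (hk : k < g) :
    Z g (k-1) k 2
      = (V g k 1 * Dinv g (k-1) * V g k (-1) * D g (k-1)) * V g (k-1) 4 := by
  obtain ⟨j, rfl⟩ : ∃ j, k = j + 1 := ⟨k - 1, (Nat.succ_pred_eq_of_pos hk1).symm⟩
  simp only [Nat.add_sub_cancel, Z, V, D, Dinv, Nat.add_assoc]
  simp only [mul_add, add_mul, mul_sub, sub_mul, smul_add, smul_sub,
    mul_smul_comm, smul_mul_assoc, smul_smul, one_mul, mul_one]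
  simp (disch := omega) only [E_mul_E_same', E_mul_E_ne, smul_zero, mul_zero,
    zero_mul, add_zero, zero_add, sub_zero, zero_sub, smul_neg, neg_smul, neg_zero]
  abel
end

section
/- For all integers k, ℓ with ℓ ≥ 2 and 1 ≤ k − ℓ (and k ≤ g), the group commutator [Z_{k−ℓ+1,k}^{2^{ℓ−1}}, D_{k−ℓ}^{−1}] := Z_{k−ℓ+1,k}^{2^{ℓ−1}} · D_{k−ℓ}^{−1} · Z_{k−ℓ+1,k}^{−2^{ℓ−1}} · D_{k−ℓ} equals Z_{k−ℓ,k}^{2^ℓ}. -/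
open Matrix

lemma E_mul_E (g a b c d : ℕ) :
    E g a b * E g c d = if b = c ∧ b < 2*g then E g a d else 0 := by
  ext x y
  simp only [E, Matrix.mul_apply, Matrix.of_apply]
  by_cases h : b = c ∧ b < 2*g
  · obtain ⟨rfl, hb⟩ := h
    rw [if_pos ⟨rfl, hb⟩]
    rw [Finset.sum_eq_single (⟨b, hb⟩ : Fin (2*g))]
    · simp only [Matrix.of_apply]
      by_cases hx : x.1 = a <;> by_cases hy : y.1 = d <;> simp [hx, hy]
    · intro z _ hz
      have : z.1 ≠ b := fun h => hz (Fin.ext h)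
      simp [this]
    · simp
  · rw [if_neg h]
    simp only [Matrix.zero_apply]
    apply Finset.sum_eq_zero
    intro z _
    by_cases h1 : x.1 = a ∧ z.1 = b <;> by_cases h2 : z.1 = c ∧ y.1 = d <;>
      simp_all <;> omega

/-- For `ℓ ≥ 2` and `ℓ ≤ k < g` (0-based version of `ℓ ≥ 2`, `1 ≤ k - ℓ`, `k ≤ g`
in 1-based indexing), the group commutator
`[Z_{k-ℓ+1,k}^{2^{ℓ-1}}, D_{k-ℓ}⁻¹] = Z_{k-ℓ+1,k}^{2^{ℓ-1}} D_{k-ℓ}⁻¹ Z_{k-ℓ+1,k}^{-2^{ℓ-1}} D_{k-ℓ}`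
equals `Z_{k-ℓ,k}^{2^ℓ}`. -/
theorem stmt8 (g k ℓ : ℕ) (hg : 3 ≤ g) (hℓ : 2 ≤ ℓ) (hℓk : ℓ ≤ k) (hk : k < g) :
    Z g (k-ℓ+1) k ((2:ℤ)^(ℓ-1)) * Dinv g (k-ℓ) *
        Z g (k-ℓ+1) k (-(2:ℤ)^(ℓ-1)) * D g (k-ℓ)
      = Z g (k-ℓ) k ((2:ℤ)^ℓ) := by
  obtain ⟨i, hi⟩ : ∃ i, k - ℓ = i := ⟨k - ℓ, rfl⟩
  have hik : i + 1 < k := by omega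
  rw [hi]
  have ht : (2:ℤ)^ℓ = 2 * 2^(ℓ-1) := by
    have h1 : ℓ - 1 + 1 = ℓ := by omega
    conv_lhs => rw [← h1]
    rw [pow_succ, mul_comm]
  set t : ℤ := (2:ℤ)^(ℓ-1) with htdef
  set A1 := E g (i+1) (g+k) with hA1
  set A2 := E g k (g+(i+1)) with hA2
  set B := E g i (i+1) with hB
  set C := E g (g+i+1) (g+i) with hC
  -- product facts
  have e11 : A1 * A1 = 0 := by rw [hA1, E_mul_E, if_neg]; omega
  have e12 : A1 * A2 = 0 := by rw [hA1, hA2, E_mul_E, if_neg]; omega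
  have e21 : A2 * A1 = 0 := by rw [hA1, hA2, E_mul_E, if_neg]; omega
  have e22 : A2 * A2 = 0 := by rw [hA2, E_mul_E, if_neg]; omega
  have e1B : A1 * B = 0 := by rw [hA1, hB, E_mul_E, if_neg]; omega
  have e2B : A2 * B = 0 := by rw [hA2, hB, E_mul_E, if_neg]; omega
  have e1C : A1 * C = 0 := by rw [hA1, hC, E_mul_E, if_neg]; omega
  have e2C : A2 * C = E g k (g+i) := by
    rw [hA2, hC, E_mul_E, if_pos ⟨by omega, by omega⟩]
  have eB1 : B * A1 = E g i (g+k) := by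
    rw [hB, hA1, E_mul_E, if_pos ⟨rfl, by omega⟩]
  have eB2 : B * A2 = 0 := by rw [hB, hA2, E_mul_E, if_neg]; omega
  have eC1 : C * A1 = 0 := by rw [hC, hA1, E_mul_E, if_neg]; omega
  have eC2 : C * A2 = 0 := by rw [hC, hA2, E_mul_E, if_neg]; omega
  have eBB : B * B = 0 := by rw [hB, E_mul_E, if_neg]; omega
  have eCC : C * C = 0 := by rw [hC, E_mul_E, if_neg]; omega
  have eBC : B * C = 0 := by rw [hB, hC, E_mul_E, if_neg]; omega
  have eCB : C * B = 0 := by rw [hC, hB, E_mul_E, if_neg]; omega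
  have eKB : E g k (g+i) * B = 0 := by rw [hB, E_mul_E, if_neg]; omega
  have eKC : E g k (g+i) * C = 0 := by rw [hC, E_mul_E, if_neg]; omega
  have eMB : E g i (g+k) * B = 0 := by rw [hB, E_mul_E, if_neg]; omega
  have eMC : E g i (g+k) * C = 0 := by rw [hC, E_mul_E, if_neg]; omega
  have eK1 : E g k (g+i) * A1 = 0 := by rw [hA1, E_mul_E, if_neg]; omega
  have eK2 : E g k (g+i) * A2 = 0 := by rw [hA2, E_mul_E, if_neg]; omega
  have eM1 : E g i (g+k) * A1 = 0 := by rw [hA1, E_mul_E, if_neg]; omega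
  have eM2 : E g i (g+k) * A2 = 0 := by rw [hA2, E_mul_E, if_neg]; omega
  show (1 + t • (A1 + A2)) * (1 - 2 • B + 2 • C) * (1 + (-t) • (A1 + A2)) *
      (1 + 2 • B - 2 • C) = 1 + (2^ℓ : ℤ) • (E g i (g+k) + E g k (g+i))
  rw [ht]
  simp only [smul_add, add_mul, mul_add, sub_mul, mul_sub, mul_one, one_mul,
    smul_mul_assoc, mul_smul_comm, smul_smul, mul_neg, neg_mul, smul_neg, e11, e12, e21, e22, e1B, e2B, e1C, e2C,
    eB1, eB2, eC1, eC2, eBB, eCC, eBC, eCB, eKB, eKC, eMB, eMC, eK1, eK2, eM1, eM2,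
    smul_zero, zero_mul, mul_zero, add_zero, zero_add, sub_zero, zero_sub, neg_neg,
    neg_smul, neg_zero]
  module
end
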